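/- arXiv:1506.06406 — 5 statements merged into one kernel-verified Lean document; each statement's English description precedes it below -/
import Mathlib

section
/- Let (T,R) be a balanced rooted tree, i.e., for every nonempty subset S of the unrooted vertices V(T)∖R, the number e(S) of edges of T with at least one endpoint in S satisfies e(S) ≥ ρ_T·|S|, where ρ_T = e(T)/(v(T)−|R|). Then every graph H that is a union of s labelled copies of T agreeing on R satisfies e(H) ≥ ρ_T·(v(H) − |R|). -/
/-!
Order the copies and let copy `i` contribute the vertices `N i` it is the first to cover outside
the common root image, together with the edges of copy `i` that touch `N i`. The sets `N i`
partition the non-root vertices of `H`, and the contributed edges are pairwise distinct, because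
an edge touching `N j` is not an edge of any earlier copy. Pulling `N i` back along copy `i`
gives a set of unrooted vertices of `T`, so balancedness yields at least `ρ_T · |N i|`
contributed edges per copy; summing over the copies proves the bound.
-/

noncomputable def eCount {V : Type} (G : SimpleGraph V) (S : Set V) : ℕ :=
  {e ∈ G.edgeSet | ∃ v ∈ S, v ∈ e}.ncard

open Set Function

theorem eCount_empty {V : Type} (G : SimpleGraph V) : eCount G ∅ = 0 := by
  simp [eCount]

namespace CopyUnion

variable {α : Type} {ι W : Type*} (F : ι → α → W) (R : Set α)

def rootImage : Set W := ⋃ i, F i '' R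

def newVertices [LT ι] (i : ι) : Set W :=
  range (F i) \ (rootImage F R ∪ ⋃ j < i, range (F j))

variable {F R}

theorem ncard_rootImage_le [Finite α] (hagree : ∀ i j, ∀ r ∈ R, F i r = F j r) :
    (rootImage F R).ncard ≤ R.ncard := by
  cases isEmpty_or_nonempty ι with
  | inl _ => simp [rootImage]
  | inr h =>
    have : rootImage F R = F h.some '' R :=
      iUnion_eq_const fun i ↦ image_congr fun r hr ↦ hagree i h.some r hr
    exact this ▸ ncard_image_le R.toFinite

theorem newVertices_subset_range [LT ι] (i : ι) : newVertices F R i ⊆ range (F i) :=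
  sdiff_subset

theorem disjoint_newVertices_range [LT ι] {i j : ι} (hij : i < j) :
    Disjoint (newVertices F R j) (range (F i)) :=
  disjoint_left.mpr fun _ hw hwi ↦ hw.2 (Or.inr (mem_biUnion hij hwi))

theorem pairwise_disjoint_newVertices [LinearOrder ι] :
    Pairwise (Disjoint on newVertices F R) :=
  (pairwise_disjoint_on _).mpr fun _ _ hij ↦
    (disjoint_newVertices_range hij).symm.mono_left (newVertices_subset_range _)

theorem preimage_newVertices_subset [LT ι] (i : ι) : F i ⁻¹' newVertices F R i ⊆ Rᶜ :=
  fun _ ha haR ↦ ha.2 (Or.inl (mem_iUnion.mpr ⟨i, mem_image_of_mem _ haR⟩))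

theorem ncard_preimage_newVertices [LT ι] {i : ι} (hinj : Injective (F i)) :
    (F i ⁻¹' newVertices F R i).ncard = (newVertices F R i).ncard := by
  rw [← ncard_image_of_injective _ hinj, image_preimage_eq_of_subset (newVertices_subset_range i)]

theorem compl_rootImage_subset_iUnion_newVertices [LinearOrder ι] [WellFoundedLT ι]
    (hcover : ∀ w, ∃ i a, F i a = w) : (rootImage F R)ᶜ ⊆ ⋃ i, newVertices F R i := by
  intro w hw
  obtain ⟨i, ⟨a, rfl⟩, hmin⟩ :=
    (wellFounded_lt (α := ι)).has_min {i | w ∈ range (F i)} (hcover w)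
  refine mem_iUnion.mpr ⟨i, ⟨a, rfl⟩, ?_⟩
  rintro (hroot | hearlier)
  · exact hw hroot
  · obtain ⟨j, hji, hj⟩ := mem_iUnion₂.mp hearlier
    exact hmin j hj hji

theorem card_le_sum_ncard_newVertices_add [Finite α] [Fintype W] [Fintype ι] [LinearOrder ι]
    (hagree : ∀ i j, ∀ r ∈ R, F i r = F j r) (hcover : ∀ w, ∃ i a, F i a = w) :
    Fintype.card W ≤ ∑ i, (newVertices F R i).ncard + R.ncard := by
  have hunion : (⋃ i, newVertices F R i).ncard = ∑ i, (newVertices F R i).ncard := by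
    rw [ncard_iUnion_of_finite (fun _ ↦ toFinite _) pairwise_disjoint_newVertices,
      finsum_eq_sum_of_fintype]
  calc Fintype.card W = (rootImage F R)ᶜ.ncard + (rootImage F R).ncard := by
        rw [ncard_compl_add_ncard, Nat.card_eq_fintype_card]
    _ ≤ ∑ i, (newVertices F R i).ncard + R.ncard := by
        gcongr
        · exact hunion ▸ ncard_le_ncard (compl_rootImage_subset_iUnion_newVertices hcover)
        · exact ncard_rootImage_le hagree

variable (T : SimpleGraph α) (F R)

def newEdges [LT ι] (i : ι) : Set (Sym2 W) :=
  Sym2.map (F i) '' {e ∈ T.edgeSet | ∃ v ∈ F i ⁻¹' newVertices F R i, v ∈ e}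

variable {T F R}

theorem ncard_newEdges [LT ι] {i : ι} (hinj : Injective (F i)) :
    (newEdges F R T i).ncard = eCount T (F i ⁻¹' newVertices F R i) :=
  ncard_image_of_injective _ (Sym2.map.injective hinj)

theorem newEdges_subset_edgeSet [LT ι] {H : SimpleGraph W} {i : ι}
    (hhom : ∀ a b, T.Adj a b → H.Adj (F i a) (F i b)) : newEdges F R T i ⊆ H.edgeSet := by
  rintro _ ⟨e, ⟨he, -⟩, rfl⟩
  induction e using Sym2.ind with
  | _ a b => exact hhom a b he

theorem pairwise_disjoint_newEdges [LinearOrder ι] : Pairwise (Disjoint on newEdges F R T) := by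
  refine (pairwise_disjoint_on _).mpr fun i j hij ↦ disjoint_left.mpr ?_
  rintro _ ⟨e, -, rfl⟩ ⟨e', ⟨-, a, ha, hae'⟩, he'⟩
  obtain ⟨b, -, hb⟩ := Sym2.mem_map.mp (he' ▸ Sym2.mem_map.mpr ⟨a, hae', rfl⟩)
  exact disjoint_left.mp (disjoint_newVertices_range hij) ha ⟨b, hb⟩

theorem sum_eCount_preimage_newVertices_le [Finite W] [Fintype ι] [LinearOrder ι]
    {H : SimpleGraph W} (hinj : ∀ i, Injective (F i))
    (hhom : ∀ i a b, T.Adj a b → H.Adj (F i a) (F i b)) :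
    ∑ i, eCount T (F i ⁻¹' newVertices F R i) ≤ H.edgeSet.ncard := by
  calc ∑ i, eCount T (F i ⁻¹' newVertices F R i) = (⋃ i, newEdges F R T i).ncard := by
        rw [ncard_iUnion_of_finite (fun _ ↦ toFinite _) pairwise_disjoint_newEdges,
          finsum_eq_sum_of_fintype]
        exact Finset.sum_congr rfl fun i _ ↦ (ncard_newEdges (hinj i)).symm
    _ ≤ H.edgeSet.ncard :=
        ncard_le_ncard (iUnion_subset fun i ↦ newEdges_subset_edgeSet (hhom i))

end CopyUnion

open CopyUnion

theorem stmt_4_general {α W : Type} [Fintype α] [Fintype W]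
    (T : SimpleGraph α)
    (R : Finset α)
    (hBal : ∀ S : Set α, S ⊆ {v | v ∉ R} → S.Nonempty →
      (eCount T S : ℝ) ≥
        ((T.edgeSet.ncard : ℝ) / ((Fintype.card α : ℝ) - (R.card : ℝ))) * S.ncard)
    (s : ℕ)
    (H : SimpleGraph W) (F : Fin s → (α → W))
    (hcopy : ∀ i, Function.Injective (F i) ∧
      ∀ a b, T.Adj a b → H.Adj (F i a) (F i b))
    (hagree : ∀ i j, ∀ r ∈ R, F i r = F j r)
    (hvert : ∀ w : W, ∃ i a, F i a = w) :
    (H.edgeSet.ncard : ℝ) ≥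
      ((T.edgeSet.ncard : ℝ) / ((Fintype.card α : ℝ) - (R.card : ℝ))) *
        ((Fintype.card W : ℝ) - (R.card : ℝ)) := by
  set ρ := (T.edgeSet.ncard : ℝ) / ((Fintype.card α : ℝ) - (R.card : ℝ))
  have hρ : 0 ≤ ρ := div_nonneg (Nat.cast_nonneg _) (sub_nonneg.mpr (mod_cast R.card_le_univ))
  have hcard : Fintype.card W ≤ ∑ i, (newVertices F R i).ncard + R.card := by
    simpa using card_le_sum_ncard_newVertices_add (R := (R : Set α)) hagree hvert
  have hbal_new : ∀ i, ρ * (newVertices F R i).ncard ≤ eCount T (F i ⁻¹' newVertices F R i) := by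
    intro i
    rw [← ncard_preimage_newVertices (hcopy i).1]
    rcases (F i ⁻¹' newVertices F R i).eq_empty_or_nonempty with hempty | hne
    · simp [hempty, eCount_empty]
    · exact hBal _ (preimage_newVertices_subset i) hne
  calc ρ * ((Fintype.card W : ℝ) - R.card) ≤ ρ * ∑ i, ((newVertices F R i).ncard : ℝ) := by
        gcongr
        exact sub_le_iff_le_add.mpr (mod_cast hcard)
    _ ≤ ∑ i, (eCount T (F i ⁻¹' newVertices F R i) : ℝ) := by
        rw [Finset.mul_sum]
        exact Finset.sum_le_sum fun i _ ↦ hbal_new i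
    _ ≤ H.edgeSet.ncard := mod_cast
        sum_eCount_preimage_newVertices_le (fun i ↦ (hcopy i).1) (fun i ↦ (hcopy i).2)

/-- If `(T,R)` is a balanced rooted tree (every nonempty set `S` of unrooted vertices
satisfies `e(S) ≥ ρ_T·|S|` with `ρ_T = e(T)/(v(T)-|R|)`), then every graph `H` which is
a union of `s` distinct labelled copies of `T` agreeing on `R` satisfies
`e(H) ≥ ρ_T · (v(H) - |R|)`. -/
theorem stmt_4 {α W : Type} [Fintype α] [Fintype W]
    (T : SimpleGraph α) (hT : T.IsTree)
    (R : Finset α) (hRind : ∀ u ∈ R, ∀ v ∈ R, ¬ T.Adj u v)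
    (hBal : ∀ S : Set α, S ⊆ {v | v ∉ R} → S.Nonempty →
      (eCount T S : ℝ) ≥
        ((T.edgeSet.ncard : ℝ) / ((Fintype.card α : ℝ) - (R.card : ℝ))) * S.ncard)
    (s : ℕ) (hs : 0 < s)
    (H : SimpleGraph W) (F : Fin s → (α → W))
    (hcopy : ∀ i, Function.Injective (F i) ∧
      ∀ a b, T.Adj a b → H.Adj (F i a) (F i b))
    (hdist : ∀ i j, i ≠ j → F i ≠ F j)
    (hagree : ∀ i j, ∀ r ∈ R, F i r = F j r)
    (hvert : ∀ w : W, ∃ i a, F i a = w)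
    (hedge : ∀ w w' : W, H.Adj w w' ↔
      ∃ i a b, T.Adj a b ∧ F i a = w ∧ F i b = w') :
    (H.edgeSet.ncard : ℝ) ≥
      ((T.edgeSet.ncard : ℝ) / ((Fintype.card α : ℝ) - (R.card : ℝ))) *
        ((Fintype.card W : ℝ) - (R.card : ℝ)) :=
  stmt_4_general T R hBal s H F hcopy hagree hvert
end

section
/- The rooted tree T_{a,b} (defined for all a ≤ b < 2a−1 directly, and for b ≥ 2a−1 recursively by attaching a rooted leaf to every unrooted vertex of T_{a,b−a}) is balanced: for every subset S of its a unrooted vertices, the number of edges incident to S is at least (b/a)·|S|. -/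
/-- The (1-indexed) base-path vertex to which the `j`-th extra rooted leaf of the base
case `T_{a,a+i}` is attached: the list `1, ⌊1+a/i⌋, …, ⌊1+(i-1)a/i⌋, a`. -/
def attachPos (a i j : ℕ) : ℕ :=
  if j = 0 then 1 else if j = i then a else 1 + j * a / i

/-- The number of recursive layers used to build `T_{a,b}`: we peel off `a` edges at a
time until the number of edges lies in `[a-1, 2a-1)`. -/
def layers (a b : ℕ) : ℕ := (b + 1 - a) / a

/-- The number of edges of the base-case tree from which `T_{a,b}` is built. -/
def baseEdges (a b : ℕ) : ℕ := b - layers a b * a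

/-- Vertices of `T_{a,b}`: the `a` unrooted base-path vertices, the rooted leaves of the
base case, and one rooted leaf per base vertex in each recursive layer. -/
def TabV (a b : ℕ) : Type :=
  Fin a ⊕ (Fin (baseEdges a b + 1 - a) ⊕ (Fin (layers a b) × Fin a))

/-- The rooted tree `T_{a,b}`, defined for `a ≤ b < 2a-1` directly (path `1, …, a` with
`b-a+1` rooted leaves attached at the prescribed positions) and for `b ≥ 2a-1`
recursively by attaching a rooted leaf to every unrooted vertex of `T_{a,b-a}`;
the recursion is unrolled into `layers a b` layers of leaves. -/
def TabFull (a b : ℕ) : SimpleGraph (TabV a b) :=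
  SimpleGraph.fromRel (fun x y =>
    match x, y with
    | Sum.inl u, Sum.inl v => (u : ℕ) + 1 = (v : ℕ)
    | Sum.inl u, Sum.inr (Sum.inl j) =>
        (u : ℕ) + 1 = attachPos a (baseEdges a b - a) (j : ℕ)
    | Sum.inl u, Sum.inr (Sum.inr q) => u = q.2
    | _, _ => False)

/-!
The proof exhibits a fractional orientation: if every edge hands out total weight at most `1`
to its endpoints and every unrooted vertex receives at least `ρ`, then a set `S` of unrooted
vertices meets at least `ρ |S|` edges. In `T_{a,b}` a rooted leaf gives its whole edge to its
unrooted neighbour. Of the path edge between the vertices `k` and `k + 1`, the vertex `k + 1`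
receives `C k - k (m - 1) / a`, where `m` is the number of base leaves and `C k` the number of
them attached at positions `≤ k`. Every path vertex then receives exactly
`1 + (m - 1) / a + layers a b = b / a`, and the shares lie in `[0, 1]` because
`C k = ⌈k (m - 1) / a⌉` for `0 < k < a` and `m ≥ 2`.
-/

open Finset

theorem le_eCount_of_fractional_orientation {V : Type} [Fintype V] (G : SimpleGraph V)
    (w : V → V → ℝ) (hw_nonneg : ∀ u v, 0 ≤ w u v)
    (hw_adj : ∀ u v, ¬ G.Adj u v → w u v = 0)
    (hw_le_one : ∀ u v, G.Adj u v → w u v + w v u ≤ 1) (S : Set V) (ρ : ℝ)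
    (hρ : ∀ u ∈ S, ρ ≤ ∑ v, w u v) :
    ρ * S.ncard ≤ eCount G S := by
  classical
  set darts := (S.toFinset ×ˢ univ).filter (fun p : V × V => G.Adj p.1 p.2)
  set edges := G.edgeFinset.filter (fun e => ∃ v ∈ S, v ∈ e)
  have h_edges : eCount G S = #edges := by
    rw [eCount, ← Set.ncard_coe_finset]; congr 1; ext e; simp [edges]
  have h_maps : ∀ p ∈ darts, s(p.1, p.2) ∈ edges := by
    intro p hp
    simp only [darts, mem_filter, mem_product, Set.mem_toFinset] at hp
    simp only [edges, mem_filter, SimpleGraph.mem_edgeFinset, SimpleGraph.mem_edgeSet]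
    exact ⟨hp.2, p.1, hp.1.1, Sym2.mem_mk_left _ _⟩
  have h_fiber : ∀ e ∈ edges, ∑ p ∈ darts with s(p.1, p.2) = e, w p.1 p.2 ≤ 1 := by
    intro e he
    induction e using Sym2.ind with
    | _ x y =>
    have hxy : G.Adj x y := by simpa [edges] using (mem_filter.1 he).1
    calc ∑ p ∈ darts with s(p.1, p.2) = s(x, y), w p.1 p.2
        ≤ ∑ p ∈ {(x, y), (y, x)}, w p.1 p.2 := by
          refine sum_le_sum_of_subset_of_nonneg (fun p hp => ?_) fun p _ _ => hw_nonneg _ _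
          simp only [mem_filter, Sym2.eq_iff] at hp
          rcases p with ⟨p₁, p₂⟩
          rcases hp.2 with ⟨rfl, rfl⟩ | ⟨rfl, rfl⟩ <;> simp
      _ = w x y + w y x := sum_pair (by simp [hxy.ne])
      _ ≤ 1 := hw_le_one x y hxy
  calc ρ * S.ncard = ∑ u ∈ S.toFinset, ρ := by
        rw [sum_const, nsmul_eq_mul, Set.ncard_eq_toFinset_card', mul_comm]
    _ ≤ ∑ u ∈ S.toFinset, ∑ v, w u v := sum_le_sum fun u hu => hρ u (Set.mem_toFinset.1 hu)
    _ = ∑ p ∈ darts, w p.1 p.2 := by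
        rw [sum_filter, sum_product]
        refine sum_congr rfl fun u _ => sum_congr rfl fun v _ => ?_
        split_ifs with h
        · rfl
        · exact hw_adj u v h
    _ = ∑ e ∈ edges, ∑ p ∈ darts with s(p.1, p.2) = e, w p.1 p.2 :=
        (sum_fiberwise_of_maps_to h_maps _).symm
    _ ≤ ∑ e ∈ edges, (1 : ℝ) := sum_le_sum h_fiber
    _ = eCount G S := by rw [h_edges, sum_const, nsmul_one]

def leavesUpTo (a m k : ℕ) : ℕ := #{j ∈ range m | attachPos a (m - 1) j ≤ k}

lemma one_le_attachPos {a : ℕ} (ha : 1 ≤ a) (i j : ℕ) : 1 ≤ attachPos a i j := by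
  unfold attachPos; split_ifs <;> simp [ha]

lemma attachPos_le {a i j : ℕ} (ha : 1 ≤ a) (hj : j ≤ i) : attachPos a i j ≤ a := by
  unfold attachPos
  split_ifs with h0 hi
  · exact ha
  · exact le_rfl
  · have : j * a / i < a := (Nat.div_lt_iff_lt_mul (by omega)).2 <| by
      nlinarith [show j < i by omega]
    omega

lemma leavesUpTo_zero {a : ℕ} (ha : 1 ≤ a) (m : ℕ) : leavesUpTo a m 0 = 0 := by
  rw [leavesUpTo, card_eq_zero, filter_eq_empty_iff]
  intro j _
  have := one_le_attachPos ha (m - 1) j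
  omega

lemma leavesUpTo_self {a : ℕ} (ha : 1 ≤ a) (m : ℕ) : leavesUpTo a m a = m := by
  rw [leavesUpTo, filter_true_of_mem, card_range]
  intro j hj
  exact attachPos_le ha (by rw [mem_range] at hj; omega)

lemma leavesUpTo_succ (a m k : ℕ) :
    leavesUpTo a m (k + 1) =
      leavesUpTo a m k + #{j ∈ range m | attachPos a (m - 1) j = k + 1} := by
  simp only [leavesUpTo, card_filter, ← sum_add_distrib]
  refine sum_congr rfl fun j _ => ?_
  split_ifs <;> omega

lemma leavesUpTo_eq_ceilDiv {a i k : ℕ} (hi : 1 ≤ i) (hk : 1 ≤ k) (hka : k < a) :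
    leavesUpTo a (i + 1) k = k * i ⌈/⌉ a := by
  have ha : 0 < a := by omega
  have hki : k * i < a * i := Nat.mul_lt_mul_of_pos_right hka hi
  rw [leavesUpTo, Nat.add_sub_cancel, ← card_range (k * i ⌈/⌉ a)]
  congr 1
  ext j
  have lt_ceilDiv : j < k * i ⌈/⌉ a ↔ a * j < k * i := by
    rw [← not_le, ceilDiv_le_iff_le_mul ha, not_le]
  rw [mem_filter, mem_range, mem_range, lt_ceilDiv]
  unfold attachPos
  split_ifs with h0 hji
  · subst h0; simp only [mul_zero]; constructor <;> intro <;> [positivity; omega]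
  · subst hji; omega
  · rw [add_comm 1, ← Nat.lt_iff_add_one_le, Nat.div_lt_iff_lt_mul (by omega), mul_comm j]
    constructor
    · exact And.right
    · intro h
      exact ⟨Nat.lt_succ_of_lt (Nat.lt_of_mul_lt_mul_left (h.trans hki)), h⟩

-- `k (m - 1) ≤ a C ≤ k (m - 1) + a`, with `k` moved across so that no subtraction truncates.
lemma leavesUpTo_bounds {a m k : ℕ} (ha : 1 ≤ a) (hk : k ≤ a) :
    k * m ≤ a * leavesUpTo a m k + k ∧ a * leavesUpTo a m k + k ≤ k * m + a := by
  rcases Nat.eq_zero_or_pos k with rfl | hk0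
  · simp [leavesUpTo_zero ha]
  rcases hk.eq_or_lt with rfl | hka
  · rw [leavesUpTo_self ha, mul_comm]; omega
  rcases m with _ | _ | i
  · simp [leavesUpTo]; omega
  · have : leavesUpTo a 1 k = 1 := by
      simp [leavesUpTo, attachPos, filter_singleton, Nat.one_le_iff_ne_zero.2 hk0.ne']
    rw [this]; omega
  · rw [leavesUpTo_eq_ceilDiv (by omega) hk0 hka]
    have h1 : k * (i + 1) ≤ a * (k * (i + 1) ⌈/⌉ a) := le_smul_ceilDiv (a := a) (by omega)
    have h2 : a * (k * (i + 1) ⌈/⌉ a) ≤ k * (i + 1) + a - 1 := Nat.mul_div_le _ _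
    have h3 : k * (i + 1 + 1) = k * (i + 1) + k := by ring
    omega

noncomputable def share (a m k : ℕ) : ℝ := leavesUpTo a m k - k * ((m : ℝ) - 1) / a

section Share

variable {a : ℕ} (ha : 1 ≤ a) (m : ℕ)
include ha

lemma share_zero : share a m 0 = 0 := by simp [share, leavesUpTo_zero ha]

lemma share_self : share a m a = 1 := by
  have : (a : ℝ) ≠ 0 := by positivity
  rw [share, leavesUpTo_self ha]; field_simp; ring

lemma share_mem_Icc {k : ℕ} (hk : k ≤ a) : share a m k ∈ Set.Icc 0 1 := by
  obtain ⟨h₁, h₂⟩ := leavesUpTo_bounds (m := m) ha hk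
  have h₁' : (k * m : ℝ) ≤ a * leavesUpTo a m k + k := by exact_mod_cast h₁
  have h₂' : (a * leavesUpTo a m k + k : ℝ) ≤ k * m + a := by exact_mod_cast h₂
  have ha' : (0 : ℝ) < a := by positivity
  rw [share, Set.mem_Icc, sub_nonneg, div_le_iff₀ ha', sub_le_comm, le_div_iff₀ ha']
  constructor <;> linarith

end Share

lemma share_succ (a m k : ℕ) : share a m (k + 1) =
    share a m k + #{j ∈ range m | attachPos a (m - 1) j = k + 1} - ((m : ℝ) - 1) / a := by
  rw [share, share, leavesUpTo_succ]; push_cast; ring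

lemma layers_mul_add_baseEdges (a b : ℕ) : layers a b * a + baseEdges a b = b := by
  obtain rfl | ha := Nat.eq_zero_or_pos a
  · simp [baseEdges]
  have : layers a b * a ≤ b + 1 - a := Nat.div_mul_le_self _ _
  rw [baseEdges]; omega

lemma le_baseEdges_add_one {a b : ℕ} (hab : a ≤ b + 1) : a ≤ baseEdges a b + 1 := by
  have : layers a b * a ≤ b + 1 - a := Nat.div_mul_le_self _ _
  rw [baseEdges]; omega

instance (a b : ℕ) : Fintype (TabV a b) :=
  inferInstanceAs <|
    Fintype (Fin a ⊕ (Fin (baseEdges a b + 1 - a) ⊕ (Fin (layers a b) × Fin a)))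

section TabFull

variable {a b : ℕ}

@[simp] lemma tabFull_adj_inl_inl (u v : Fin a) :
    (TabFull a b).Adj (.inl u) (.inl v) ↔ (u : ℕ) + 1 = v ∨ (v : ℕ) + 1 = u := by
  refine (SimpleGraph.fromRel_adj _ _ _).trans ?_
  refine ⟨And.right, fun h => ⟨fun huv => ?_, h⟩⟩
  cases Sum.inl.inj huv; omega

@[simp] lemma tabFull_adj_inl_leaf (u : Fin a) (j : Fin (baseEdges a b + 1 - a)) :
    (TabFull a b).Adj (.inl u) (.inr (.inl j)) ↔
      (u : ℕ) + 1 = attachPos a (baseEdges a b - a) j :=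
  (SimpleGraph.fromRel_adj _ _ _).trans
    ⟨fun h => h.2.resolve_right id, fun h => ⟨Sum.inl_ne_inr, .inl h⟩⟩

@[simp] lemma tabFull_adj_inl_layer (u : Fin a) (q : Fin (layers a b) × Fin a) :
    (TabFull a b).Adj (.inl u) (.inr (.inr q)) ↔ u = q.2 :=
  (SimpleGraph.fromRel_adj _ _ _).trans
    ⟨fun h => h.2.resolve_right id, fun h => ⟨Sum.inl_ne_inr, .inl h⟩⟩

@[simp] lemma tabFull_not_adj_inr_inr
    (x y : Fin (baseEdges a b + 1 - a) ⊕ (Fin (layers a b) × Fin a)) :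
    ¬ (TabFull a b).Adj (.inr x) (.inr y) := by
  intro h
  obtain ⟨-, h⟩ := (SimpleGraph.fromRel_adj _ _ _).1 h
  rcases x with _ | _ <;> rcases y with _ | _ <;> exact h.elim id id

end TabFull

/-- The vertex `u : Fin a` is the path vertex `u + 1`, so the path edge `{u, u + 1}` gives
`share (u + 1)` to `u + 1`. -/
noncomputable def tabWeight (a b : ℕ) : TabV a b → TabV a b → ℝ
  | .inl u, .inl v =>
      if (u : ℕ) + 1 = v then 1 - share a (baseEdges a b + 1 - a) (u + 1)
      else if (v : ℕ) + 1 = u then share a (baseEdges a b + 1 - a) u else 0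
  | .inl u, .inr (.inl j) => if (u : ℕ) + 1 = attachPos a (baseEdges a b - a) j then 1 else 0
  | .inl u, .inr (.inr q) => if u = q.2 then 1 else 0
  | .inr _, _ => 0

lemma tabWeight_nonneg {a b : ℕ} (ha : 1 ≤ a) (x y : TabV a b) : 0 ≤ tabWeight a b x y := by
  rcases x with u | x
  · rcases y with v | j | q <;> simp only [tabWeight]
    · split_ifs
      · linarith [(share_mem_Icc ha (baseEdges a b + 1 - a) (show (u : ℕ) + 1 ≤ a by omega)).2]
      · exact (share_mem_Icc ha (baseEdges a b + 1 - a) u.isLt.le).1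
      · rfl
    all_goals split_ifs <;> norm_num
  · exact le_rfl

lemma tabWeight_of_not_adj {a b : ℕ} (x y : TabV a b) (hxy : ¬ (TabFull a b).Adj x y) :
    tabWeight a b x y = 0 := by
  rcases x with u | x
  · rcases y with v | j | q <;> simp_all [tabWeight]
  · rfl

lemma tabWeight_add_le_one {a b : ℕ} (x y : TabV a b) (hxy : (TabFull a b).Adj x y) :
    tabWeight a b x y + tabWeight a b y x ≤ 1 := by
  rcases x with u | x <;> rcases y with v | y
  · rw [tabFull_adj_inl_inl] at hxy
    simp only [tabWeight]
    rcases hxy with h | h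
    · rw [if_pos h, if_neg (by omega), if_pos h, ← h]; simp
    · rw [if_neg (by omega), if_pos h, ← h]; simp
  · rcases y with _ | _ <;> simp only [tabWeight] <;> split_ifs <;> norm_num
  · rcases x with _ | _ <;> simp only [tabWeight] <;> split_ifs <;> norm_num
  · exact absurd hxy (tabFull_not_adj_inr_inr x y)

section SumTabWeight

variable {a b : ℕ} (ha : 1 ≤ a) (u : Fin a)
include ha

lemma sum_tabWeight_inl_inl :
    ∑ v : Fin a, tabWeight a b (.inl u) (.inl v) =
      1 - share a (baseEdges a b + 1 - a) (u + 1) + share a (baseEdges a b + 1 - a) u := by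
  set s := share a (baseEdges a b + 1 - a)
  have hs₀ : s 0 = 0 := share_zero ha _
  have hsa : s a = 1 := share_self ha _
  have h_split : ∀ n : ℕ,
      (if (u : ℕ) + 1 = n then 1 - s (u + 1) else if n + 1 = u then s u else 0) =
        (if n = u + 1 then 1 - s (u + 1) else 0) + (if n = u - 1 then s u else 0) := by
    intro n
    split_ifs <;> (try simp only [add_zero, zero_add]) <;>
      first | omega | rfl | (rw [show (u : ℕ) = 0 by omega]; exact hs₀.symm)
  simp only [tabWeight]
  rw [Fin.sum_univ_eq_sum_range (fun n => if (u : ℕ) + 1 = n then 1 - s (u + 1)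
    else if n + 1 = u then s u else 0), sum_congr rfl fun n _ => h_split n, sum_add_distrib,
    sum_ite_eq', sum_ite_eq', if_pos (show (u : ℕ) - 1 ∈ range a from mem_range.2 (by omega))]
  split_ifs with h
  · rfl
  · rw [show (u : ℕ) + 1 = a by simp at h; omega, hsa, sub_self]

omit ha in
lemma sum_tabWeight_inl_leaf :
    ∑ j : Fin (baseEdges a b + 1 - a), tabWeight a b (.inl u) (.inr (.inl j)) =
      #{j ∈ range (baseEdges a b + 1 - a) |
        attachPos a (baseEdges a b + 1 - a - 1) j = u + 1} := by
  simp only [tabWeight]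
  rw [Fin.sum_univ_eq_sum_range (fun n => if (u : ℕ) + 1 = attachPos a (baseEdges a b - a) n
    then (1 : ℝ) else 0), natCast_card_filter]
  refine sum_congr rfl fun j _ => ?_
  rw [show baseEdges a b - a = baseEdges a b + 1 - a - 1 by omega]
  exact if_congr eq_comm rfl rfl

omit ha in
lemma sum_tabWeight_inl_layer :
    ∑ q : Fin (layers a b) × Fin a, tabWeight a b (.inl u) (.inr (.inr q)) = layers a b := by
  rw [Fintype.sum_prod_type]; simp [tabWeight]

lemma sum_tabWeight_inl (hab : a ≤ b) : ∑ v, tabWeight a b (.inl u) v = b / a := by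
  set m := baseEdges a b + 1 - a
  have hm : (m : ℝ) = baseEdges a b + 1 - a := by
    have := le_baseEdges_add_one (show a ≤ b + 1 by omega)
    push_cast [m, Nat.cast_sub this]; ring
  have hb : (b : ℝ) = layers a b * a + baseEdges a b := by
    exact_mod_cast (layers_mul_add_baseEdges a b).symm
  erw [Fintype.sum_sum_type, Fintype.sum_sum_type]
  rw [sum_tabWeight_inl_inl ha, sum_tabWeight_inl_leaf, sum_tabWeight_inl_layer, share_succ, hb, hm]
  field_simp
  ring

end SumTabWeight

/-- `T_{a,b}` is balanced: every subset `S` of its `a` unrooted (base-path) vertices is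
incident to at least `(b/a)·|S|` edges. -/
theorem stmt_7 (a b : ℕ) (ha : 1 ≤ a) (hab : a ≤ b)
    (S : Set (TabV a b)) (hS : S ⊆ Set.range Sum.inl) :
    (eCount (TabFull a b) S : ℝ) ≥ ((b : ℝ) / (a : ℝ)) * S.ncard := by
  refine le_eCount_of_fractional_orientation (TabFull a b) (tabWeight a b) (tabWeight_nonneg ha)
    tabWeight_of_not_adj tabWeight_add_le_one S _ fun x hx => ?_
  obtain ⟨u, rfl⟩ := hS hx
  exact (sum_tabWeight_inl ha u hab).ge
end

section
/- Let q be a prime power with q > m(m−1)/2 and d ≥ m−1. If f is a uniformly random polynomial of degree at most d in t variables over 𝔽_q (uniform over all 𝔽_q-linear combinations of monomials of total degree ≤ d), and x₁,…,x_m are m distinct points of 𝔽_q^t, then the probability that f(x_i) = 0 for all i = 1,…,m is exactly q^{−m}. -/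
/-!
The evaluation map `𝒫_d → F^m`, `f ↦ (f(x₁), …, f(x_m))`, is `F`-linear, and it is
surjective as soon as `d ≥ m - 1`: for each `i`, the product over `j ≠ i` of affine forms
`X_k - x_j k` (with `k` a coordinate where `x_j` and `x_i` differ) has degree `≤ m - 1` and
vanishes at every `x_j` except `x_i`, so these products span `F^m`. All fibres of a surjective
linear map are cosets of its kernel, so the polynomials vanishing at every `xᵢ` make up exactly
a `q^{-m}` fraction of `𝒫_d`.
-/

open MvPolynomial

theorem AddMonoidHom.card_ker_mul_card_of_surjective {G H : Type*} [AddGroup G] [AddGroup H]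
    (f : G →+ H) (hf : Function.Surjective f) : Nat.card f.ker * Nat.card H = Nat.card G := by
  rw [← f.ker.card_mul_index, AddSubgroup.index_ker, f.range_eq_top_of_surjective hf,
    AddSubgroup.card_top]

namespace MvPolynomial

variable {σ ι K : Type*} [Field K]

theorem exists_totalDegree_le_one_eval_eq_zero_eval_eq_one {a b : σ → K} (hab : a ≠ b) :
    ∃ g : MvPolynomial σ K, g.totalDegree ≤ 1 ∧ eval a g = 0 ∧ eval b g = 1 := by
  obtain ⟨k, hk⟩ := Function.ne_iff.mp hab
  refine ⟨C (b k - a k)⁻¹ * (X k - C (a k)), ?_, by simp, ?_⟩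
  · refine (totalDegree_mul _ _).trans ?_
    rw [totalDegree_C, zero_add]
    exact (totalDegree_sub _ _).trans (by simp)
  · simp [inv_mul_cancel₀ (sub_ne_zero.mpr hk.symm)]

/-- Lagrange basis polynomials for distinct points of `σ → K`. -/
theorem exists_totalDegree_le_eval_eq_ite [Fintype ι] [DecidableEq ι] {x : ι → σ → K}
    (hx : Function.Injective x) (i : ι) :
    ∃ p : MvPolynomial σ K, p.totalDegree ≤ Fintype.card ι - 1 ∧
      ∀ j, eval (x j) p = if j = i then 1 else 0 := by
  have hsep : ∀ j, ∃ g : MvPolynomial σ K,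
      g.totalDegree ≤ 1 ∧ (j ≠ i → eval (x j) g = 0) ∧ eval (x i) g = 1 := by
    intro j
    by_cases hji : j = i
    · exact ⟨1, by simp, fun h => absurd hji h, by simp⟩
    · obtain ⟨g, hdeg, hj, hi⟩ :=
        exists_totalDegree_le_one_eval_eq_zero_eval_eq_one (hx.ne hji)
      exact ⟨g, hdeg, fun _ => hj, hi⟩
  choose g hg_deg hg_zero hg_one using hsep
  refine ⟨∏ j ∈ Finset.univ.erase i, g j, ?_, fun j => ?_⟩
  · calc (∏ j ∈ Finset.univ.erase i, g j).totalDegree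
        ≤ ∑ j ∈ Finset.univ.erase i, (g j).totalDegree := totalDegree_finsetProd _ _
      _ ≤ ∑ _j ∈ Finset.univ.erase i, 1 := Finset.sum_le_sum fun j _ => hg_deg j
      _ = Fintype.card ι - 1 := by simp [Finset.card_erase_of_mem]
  · rw [map_prod]
    split_ifs with hji
    · subst hji
      exact Finset.prod_eq_one fun k _ => hg_one k
    · exact Finset.prod_eq_zero (Finset.mem_erase.mpr ⟨hji, Finset.mem_univ j⟩) (hg_zero j hji)

noncomputable def evalRestrictTotalDegree (d : ℕ) (x : ι → σ → K) :
    restrictTotalDegree σ K d →ₗ[K] ι → K :=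
  LinearMap.pi fun i => (aeval (x i)).toLinearMap ∘ₗ (restrictTotalDegree σ K d).subtype

@[simp]
theorem evalRestrictTotalDegree_apply (d : ℕ) (x : ι → σ → K)
    (f : restrictTotalDegree σ K d) (i : ι) : evalRestrictTotalDegree d x f i = eval (x i) f := by
  simp [evalRestrictTotalDegree, aeval_eq_eval]

theorem mem_ker_evalRestrictTotalDegree {d : ℕ} {x : ι → σ → K}
    {f : restrictTotalDegree σ K d} :
    f ∈ LinearMap.ker (evalRestrictTotalDegree d x) ↔ ∀ i, eval (x i) f = 0 := by
  rw [LinearMap.mem_ker, _root_.funext_iff]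
  simp

theorem evalRestrictTotalDegree_surjective [Fintype ι] {d : ℕ} {x : ι → σ → K}
    (hx : Function.Injective x) (hd : Fintype.card ι - 1 ≤ d) :
    Function.Surjective (evalRestrictTotalDegree d x) := by
  classical
  choose p hp_deg hp_eval using exists_totalDegree_le_eval_eq_ite hx
  intro v
  have hmem : ∑ i, v i • p i ∈ restrictTotalDegree σ K d :=
    Submodule.sum_mem _ fun i _ => Submodule.smul_mem _ _
      ((mem_restrictTotalDegree _ _ _).mpr ((hp_deg i).trans hd))
  refine ⟨⟨_, hmem⟩, ?_⟩
  funext j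
  simp [hp_eval]

end MvPolynomial

theorem stmt_9_general {F : Type} [Field F] [Fintype F] (t m d : ℕ)
    (hd : m - 1 ≤ d)
    (x : Fin m → (Fin t → F)) (hx : Function.Injective x) :
    Nat.card {f : MvPolynomial (Fin t) F //
        f.totalDegree ≤ d ∧ ∀ i, MvPolynomial.eval (x i) f = 0} *
      Fintype.card F ^ m
    = Nat.card {f : MvPolynomial (Fin t) F // f.totalDegree ≤ d} := by
  set L := evalRestrictTotalDegree d x
  have hsurj : Function.Surjective L :=
    evalRestrictTotalDegree_surjective hx (by simpa using hd)
  have hker : {f : MvPolynomial (Fin t) F // f.totalDegree ≤ d ∧ ∀ i, eval (x i) f = 0} ≃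
      LinearMap.ker L :=
    (((Equiv.subtypeEquivRight fun _ => mem_ker_evalRestrictTotalDegree).trans
      (Equiv.subtypeSubtypeEquivSubtypeInter (· ∈ restrictTotalDegree (Fin t) F d)
        fun f => ∀ i, eval (x i) f = 0)).trans
      (Equiv.subtypeEquivRight fun _ => and_congr_left' (mem_restrictTotalDegree _ _ _))).symm
  calc _ = Nat.card (LinearMap.ker L) * Nat.card (Fin m → F) := by
        rw [Nat.card_congr hker, Nat.card_fun, Nat.card_fin, Nat.card_eq_fintype_card (α := F)]
    _ = Nat.card (restrictTotalDegree (Fin t) F d) :=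
        L.toAddMonoidHom.card_ker_mul_card_of_surjective hsurj
    _ = _ := Nat.card_congr (Equiv.subtypeEquivRight fun _ => mem_restrictTotalDegree _ _ _)

/-- Random polynomial vanishing lemma: if `q > m(m-1)/2` and `d ≥ m-1`, then for any `m`
distinct points `x₁, …, x_m` of `𝔽_q^t`, exactly a `q^{-m}` proportion of the
polynomials of degree at most `d` in `t` variables vanish at all the `xᵢ`; i.e. a
uniformly random such polynomial vanishes at all of them with probability `q^{-m}`. -/
theorem stmt_9 {F : Type} [Field F] [Fintype F] (t m d : ℕ)
    (hq : m * (m - 1) / 2 < Fintype.card F) (hd : m - 1 ≤ d)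
    (x : Fin m → (Fin t → F)) (hx : Function.Injective x) :
    Nat.card {f : MvPolynomial (Fin t) F //
        f.totalDegree ≤ d ∧ ∀ i, MvPolynomial.eval (x i) f = 0} *
      Fintype.card F ^ m
    = Nat.card {f : MvPolynomial (Fin t) F // f.totalDegree ≤ d} :=
  stmt_9_general t m d hd x hx
end

section
/- For any d ≥ m−1 and any m distinct points x₁,…,x_m in 𝔽_q^t with q > binom(m,2), the evaluation map from the space of polynomials of degree at most d in t variables over 𝔽_q to 𝔽_q^m, sending f to (f(x₁),…,f(x_m)), is a surjective linear map. -/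
/-!
A coordinate in which two distinct points differ gives a polynomial `X k - c` of degree one
vanishing at the first point but not at the second. Multiplying these over the other `m - 1`
points yields, for each `xᵢ`, a Lagrange polynomial of degree at most `m - 1` that is `1` at `xᵢ`
and `0` at the other points; linear combinations of them interpolate any prescribed values.
-/

open Function Finset

namespace MvPolynomial

variable {σ R K ι : Type*}

theorem exists_totalDegree_le_one_eval_eq_zero_ne_zero [CommRing R] {a b : σ → R}
    (hab : a ≠ b) : ∃ L : MvPolynomial σ R, L.totalDegree ≤ 1 ∧ eval a L = 0 ∧ eval b L ≠ 0 := by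
  obtain ⟨k, hk⟩ := ne_iff.mp hab
  have : Nontrivial R := nontrivial_of_ne _ _ hk
  refine ⟨X k - C (a k), ?_, by simp, by simpa [sub_eq_zero] using hk.symm⟩
  exact (totalDegree_sub_C_le _ _).trans (totalDegree_X k).le

theorem exists_totalDegree_le_card_eval_eq_zero_ne_zero [CommRing R] [IsDomain R]
    (s : Finset (σ → R)) {b : σ → R} (hb : b ∉ s) :
    ∃ Q : MvPolynomial σ R, Q.totalDegree ≤ #s ∧ (∀ a ∈ s, eval a Q = 0) ∧ eval b Q ≠ 0 := by
  classical
  induction s using Finset.induction_on with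
  | empty => exact ⟨1, by simp, by simp, by simp⟩
  | insert a s has ih =>
    obtain ⟨hba, hbs⟩ := not_or.mp (mem_insert.not.mp hb)
    obtain ⟨Q, hQdeg, hQs, hQb⟩ := ih hbs
    obtain ⟨L, hLdeg, hLa, hLb⟩ := exists_totalDegree_le_one_eval_eq_zero_ne_zero (Ne.symm hba)
    refine ⟨L * Q, ?_, ?_, by simpa using ⟨hLb, hQb⟩⟩
    · rw [card_insert_of_notMem has]
      exact (totalDegree_mul L Q).trans (by omega)
    · simp_all

theorem exists_totalDegree_le_eval_eq_single [Field K] [Fintype ι] [DecidableEq ι]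
    {x : ι → σ → K} (hx : Injective x) (i : ι) :
    ∃ P : MvPolynomial σ K, P.totalDegree ≤ Fintype.card ι - 1 ∧
      ∀ j, eval (x j) P = (Pi.single i 1 : ι → K) j := by
  classical
  have hxi : x i ∉ (univ.erase i).image x := by simp [hx.eq_iff]
  obtain ⟨Q, hQdeg, hQ, hQi⟩ := exists_totalDegree_le_card_eval_eq_zero_ne_zero _ hxi
  refine ⟨(eval (x i) Q)⁻¹ • Q, ?_, fun j => ?_⟩
  · calc ((eval (x i) Q)⁻¹ • Q).totalDegree ≤ Q.totalDegree := totalDegree_smul_le _ _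
      _ ≤ #((univ.erase i).image x) := hQdeg
      _ ≤ #(univ.erase i) := card_image_le
      _ = Fintype.card ι - 1 := by simp [card_erase_of_mem]
  · obtain rfl | hji := eq_or_ne j i
    · simp [hQi]
    · simp [hQ (x j) (mem_image_of_mem x (mem_erase.mpr ⟨hji, mem_univ j⟩)), hji]

theorem surjective_pi_aeval_restrictTotalDegree [Field K] [Fintype ι] {x : ι → σ → K}
    (hx : Injective x) {d : ℕ} (hd : Fintype.card ι - 1 ≤ d) :
    Surjective (LinearMap.pi fun i : ι =>
      (aeval (x i)).toLinearMap.comp (restrictTotalDegree σ K d).subtype) := by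
  classical
  choose P hPdeg hP using exists_totalDegree_le_eval_eq_single hx
  intro y
  have hmem : ∑ i, y i • P i ∈ restrictTotalDegree σ K d := by
    rw [mem_restrictTotalDegree]
    refine (totalDegree_finsetSum _ _).trans (Finset.sup_le fun i _ => ?_)
    exact (totalDegree_smul_le _ _).trans ((hPdeg i).trans hd)
  refine ⟨⟨_, hmem⟩, ?_⟩
  ext j
  simp [hP, Pi.single_apply]

end MvPolynomial

theorem stmt_10_general {F : Type} [Field F] (t m d : ℕ)
    (hd : m - 1 ≤ d)
    (x : Fin m → (Fin t → F)) (hx : Function.Injective x) :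
    Function.Surjective
      (LinearMap.pi (fun i : Fin m =>
        ((MvPolynomial.aeval (x i)).toLinearMap).comp
          (MvPolynomial.restrictTotalDegree (Fin t) F d).subtype)) :=
  MvPolynomial.surjective_pi_aeval_restrictTotalDegree hx (by simpa using hd)

/-- The evaluation map at `m` distinct points `x₁, …, x_m ∈ 𝔽_q^t`, from the space of
polynomials of total degree at most `d` to `𝔽_q^m`, is a surjective linear map,
provided `d ≥ m-1` and `q > binom(m,2)`. -/
theorem stmt_10 {F : Type} [Field F] [Fintype F] (t m d : ℕ)
    (hq : m * (m - 1) / 2 < Fintype.card F) (hd : m - 1 ≤ d)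
    (x : Fin m → (Fin t → F)) (hx : Function.Injective x) :
    Function.Surjective
      (LinearMap.pi (fun i : Fin m =>
        ((MvPolynomial.aeval (x i)).toLinearMap).comp
          (MvPolynomial.restrictTotalDegree (Fin t) F d).subtype)) :=
  stmt_10_general t m d hd x hx
end

section
/- Let (T,R) be a balanced rooted tree with a unrooted vertices, b edges, and r = |R| roots. Suppose that for every H in 𝒯^s_{≤} := 𝒯¹ ∪ … ∪ 𝒯^s one has e(H) ≥ (b/a)(v(H) − r), and that N = q^b and the probability that any fixed collection of copies of T with m total edges appears is q^{−a m}. If N_s(H) = O_s(N^{v(H)−r}) denotes the number of ordered s-tuples of rooted copies of T whose union is a copy of H, then Σ_{H ∈ 𝒯^s_{≤}} N_s(H)·q^{−a·e(H)} = O_s(1); i.e., the s-th moment of the number of rooted copies of T at a fixed root tuple is bounded independently of q. -/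
/-! By the density condition, `N^{v(H)-r} = q^{b(v(H)-r)} ≤ q^{a e(H)}`, so each term
`N_s(H) q^{-a e(H)}` is at most `max C₁ 0`; there are finitely many `H`. -/

lemma mul_inv_pow_le_max_of_le_mul_pow {K : Type*} [Field K] [LinearOrder K]
    [IsStrictOrderedRing K] {x y C : K} {n m : ℕ} (hx : 1 ≤ x) (hnm : n ≤ m)
    (hy : y ≤ C * x ^ n) : y * (x ^ m)⁻¹ ≤ max C 0 := by
  rw [mul_inv_le_iff₀ (pow_pos (zero_lt_one.trans_le hx) m)]
  calc y ≤ C * x ^ n := hy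
    _ ≤ max C 0 * x ^ m :=
      mul_le_mul (le_max_left _ _) (pow_le_pow_right₀ hx hnm) (by positivity) (le_max_right _ _)

theorem stmt_12_general (a b r : ℕ) (ι : Type) [Fintype ι]
    (v e : ι → ℕ) (Ns : ℕ → ι → ℕ) (C₁ : ℝ)
    (hNs : ∀ q H, (Ns q H : ℝ) ≤ C₁ * (((q : ℝ) ^ b) ^ (v H - r)))
    (hdens : ∀ H, b * (v H - r) ≤ a * e H) :
    ∃ C : ℝ, ∀ q : ℕ, 1 ≤ q →
      ∑ H, (Ns q H : ℝ) * ((q : ℝ) ^ (a * e H))⁻¹ ≤ C := by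
  refine ⟨Fintype.card ι • max C₁ 0, fun q hq => ?_⟩
  have hq' : (1 : ℝ) ≤ q := by exact_mod_cast hq
  refine Finset.sum_le_card_nsmul _ _ _ fun H _ => ?_
  exact mul_inv_pow_le_max_of_le_mul_pow hq' (hdens H) (by simpa only [← pow_mul] using hNs q H)

/-- Moment computation in the random algebraic construction.  Let `ι` index the finite
family `𝒯^s_≤` of possible unions `H` of at most `s` rooted copies of `T`, with `v H`
vertices and `e H` edges, where `T` has `a` unrooted vertices, `b` edges and `r` roots.
Suppose the density condition `b·(v(H) - r) ≤ a·e(H)` holds for all `H`, and that the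
number `Ns q H` of ordered `s`-tuples of rooted copies of `T` in the complete bipartite
graph on two copies of `𝔽_q^b` (of size `N = q^b`) whose union is a copy of `H`
satisfies `Ns q H ≤ C₁ · N^{v(H)-r}`.  Then the `s`-th moment
`Σ_H Ns(H) · q^{-a·e(H)}` is bounded by a constant independent of `q`. -/
theorem stmt_12 (a b r s : ℕ) (ι : Type) [Fintype ι]
    (v e : ι → ℕ) (Ns : ℕ → ι → ℕ) (C₁ : ℝ)
    (hNs : ∀ q H, (Ns q H : ℝ) ≤ C₁ * (((q : ℝ) ^ b) ^ (v H - r)))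
    (hdens : ∀ H, b * (v H - r) ≤ a * e H) :
    ∃ C : ℝ, ∀ q : ℕ, 1 ≤ q →
      ∑ H, (Ns q H : ℝ) * ((q : ℝ) ^ (a * e H))⁻¹ ≤ C :=
  stmt_12_general a b r ι v e Ns C₁ hNs hdens
end
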